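/- Let G be a group such that G/Z_i(G) is finite for some i ≥ 0 (i.e., G is finite-by-nilpotent). Then every right Engel element of G lies in Z_k(G) for some finite k; in particular, the set of right Engel elements of G equals the ω-hypercentre Z_ω(G) = ⋃_{k<ω} Z_k(G), assuming that every right Engel element of the finite quotient G/Z_i(G) lies in some finite term of its upper central series. -/

import Mathlib

/-!
Right Engel elements map to right Engel elements under the quotient map `G → G/Z_i(G)`, so by
the hypothesis on the quotient their images lie in some `Z_j(G/Z_i(G))`, whose preimage in `G`
is `Z_{i+j}(G)`. Conversely, an element of `Z_k(G)` is right Engel because each Engel step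
`x ↦ [x, g]` moves it one term down the upper central series.
-/

/-- Iterated Engel commutator with the convention `[x, y] = x⁻¹ * y⁻¹ * x * y`. -/
def engel {G : Type*} [Group G] (x y : G) : ℕ → G
  | 0 => x
  | n + 1 => (engel x y n)⁻¹ * y⁻¹ * engel x y n * y

open scoped commutatorElement

section

variable {G H : Type*} [Group G] [Group H]

def IsRightEngel (a : G) : Prop :=
  ∀ g : G, ∃ n ≥ 1, engel a g n = 1

theorem map_engel (f : G →* H) (x y : G) : ∀ n, f (engel x y n) = engel (f x) (f y) n
  | 0 => rfl
  | n + 1 => by simp [engel, map_engel f x y n]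

theorem IsRightEngel.map_of_surjective {f : G →* H} (hf : Function.Surjective f) {a : G}
    (ha : IsRightEngel a) : IsRightEngel (f a) := by
  intro q
  obtain ⟨g, rfl⟩ := hf q
  obtain ⟨n, hn, h⟩ := ha g
  exact ⟨n, hn, by rw [← map_engel, h, map_one]⟩

theorem engel_succ_eq_commutatorElement (x y : G) (n : ℕ) :
    engel x y (n + 1) = ⁅(engel x y n)⁻¹, y⁻¹⁆ := by
  simp [engel, commutatorElement_def]

theorem engel_mem_upperCentralSeries {k : ℕ} (g : G) :
    ∀ {m : ℕ} {a : G}, a ∈ Subgroup.upperCentralSeries G (k + m) →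
      engel a g m ∈ Subgroup.upperCentralSeries G k
  | 0, _, ha => ha
  | m + 1, a, ha => by
    have hm : engel a g m ∈ Subgroup.upperCentralSeries G (k + 1) :=
      engel_mem_upperCentralSeries (m := m) g (by rwa [Nat.add_right_comm])
    rw [engel_succ_eq_commutatorElement]
    exact Subgroup.mem_upperCentralSeries_succ_iff.mp (inv_mem hm) g⁻¹

theorem engel_eq_one_of_mem_upperCentralSeries {m : ℕ} {a : G}
    (ha : a ∈ Subgroup.upperCentralSeries G m) (g : G) : engel a g m = 1 := by
  simpa using engel_mem_upperCentralSeries (k := 0) g (by rwa [Nat.zero_add])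

theorem isRightEngel_of_mem_upperCentralSeries {k : ℕ} {a : G}
    (ha : a ∈ Subgroup.upperCentralSeries G k) : IsRightEngel a := fun g =>
  ⟨k + 1, Nat.succ_pos k, engel_eq_one_of_mem_upperCentralSeries
    (Subgroup.upperCentralSeries_mono G (Nat.le_succ k) ha) g⟩

theorem comap_upperCentralSeries_of_ker_eq {f : G →* H} (hf : Function.Surjective f) {i : ℕ}
    (hker : f.ker = Subgroup.upperCentralSeries G i) :
    ∀ j, (Subgroup.upperCentralSeries H j).comap f = Subgroup.upperCentralSeries G (i + j)
  | 0 => by simpa using hker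
  | j + 1 => by
    ext x
    rw [← Nat.add_assoc, Subgroup.mem_comap, Subgroup.mem_upperCentralSeries_succ_iff,
      Subgroup.mem_upperCentralSeries_succ_iff, hf.forall,
      ← comap_upperCentralSeries_of_ker_eq hf hker j]
    simp only [Subgroup.mem_comap, map_commutatorElement]

end

theorem finite_by_nilpotent_right_engel_eq_omega_hypercentre_general {G : Type*} [Group G]
    (i : ℕ)
    (hBaer : ∀ a : G ⧸ Subgroup.upperCentralSeries G i,
      (∀ g : G ⧸ Subgroup.upperCentralSeries G i, ∃ n ≥ 1, engel a g n = 1) →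
      ∃ j, a ∈ Subgroup.upperCentralSeries (G ⧸ Subgroup.upperCentralSeries G i) j) :
    (∀ a : G, (∀ g : G, ∃ n ≥ 1, engel a g n = 1) → ∃ k, a ∈ Subgroup.upperCentralSeries G k) ∧
    {a : G | ∀ g : G, ∃ n ≥ 1, engel a g n = 1} =
      ⋃ k : ℕ, (Subgroup.upperCentralSeries G k : Set G) := by
  have hπ := QuotientGroup.mk'_surjective (Subgroup.upperCentralSeries G i)
  have hypercentral : ∀ a : G, IsRightEngel a → ∃ k, a ∈ Subgroup.upperCentralSeries G k := by
    intro a ha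
    obtain ⟨j, hj⟩ := hBaer _ (ha.map_of_surjective hπ)
    exact ⟨i + j, comap_upperCentralSeries_of_ker_eq hπ (QuotientGroup.ker_mk' _) j ▸ hj⟩
  refine ⟨hypercentral, Set.ext fun a => ?_⟩
  simp only [Set.mem_ofPred_eq, Set.mem_iUnion, SetLike.mem_coe]
  exact ⟨hypercentral a, fun ⟨k, hk⟩ => isRightEngel_of_mem_upperCentralSeries hk⟩

/-- If `G/Z_i(G)` is finite (i.e. `G` is finite-by-nilpotent), and every right Engel
element of the finite quotient `G/Z_i(G)` lies in some finite term of its upper central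
series, then the set of right Engel elements of `G` equals `Z_ω(G) = ⋃_k Z_k(G)`. -/
theorem finite_by_nilpotent_right_engel_eq_omega_hypercentre {G : Type*} [Group G]
    (i : ℕ) (hfin : Finite (G ⧸ Subgroup.upperCentralSeries G i))
    (hBaer : ∀ a : G ⧸ Subgroup.upperCentralSeries G i,
      (∀ g : G ⧸ Subgroup.upperCentralSeries G i, ∃ n ≥ 1, engel a g n = 1) →
      ∃ j, a ∈ Subgroup.upperCentralSeries (G ⧸ Subgroup.upperCentralSeries G i) j) :
    (∀ a : G, (∀ g : G, ∃ n ≥ 1, engel a g n = 1) → ∃ k, a ∈ Subgroup.upperCentralSeries G k) ∧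
    {a : G | ∀ g : G, ∃ n ≥ 1, engel a g n = 1} =
      ⋃ k : ℕ, (Subgroup.upperCentralSeries G k : Set G) :=
  finite_by_nilpotent_right_engel_eq_omega_hypercentre_general i hBaer
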